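/- arXiv:2501.04781 — 4 statements merged into one kernel-verified Lean document; each statement's English description precedes it below -/
import Mathlib

section
/- Let H be a real Hilbert space, S ⊆ H a nonempty closed set, ε, η > 0, and let S_η be a closed set with S ⊆ S_η ⊆ S + η𝔹. Then for every x ∈ H: (1) proj_S^ε(x) ⊆ proj_S^{ε,η}(x), and (2) proj_S^{ε,η}(x) ⊆ proj_S^{ε + 2η(d_S(x)+√ε) + η²}(x) + η𝔹; that is, every z ∈ proj_S^{ε,η}(x) can be written z = s + ηb with ‖b‖ ≤ 1 and s ∈ S satisfying ‖x−s‖² < d_S(x)² + ε + 2η(d_S(x)+√ε) + η². -/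
open Metric Set
open scoped Pointwise

variable {H : Type*} [NormedAddCommGroup H] [InnerProductSpace ℝ H]

/-- The set of ε-approximate projections of `x` onto `S`:
`proj_S^ε(x) := {z ∈ S : ‖x−z‖² < d_S(x)² + ε}`. -/
noncomputable def approxProj (S : Set H) (ε : ℝ) (x : H) : Set H :=
  {z | z ∈ S ∧ ‖x - z‖ ^ 2 < infDist x S ^ 2 + ε}

/-- The set of ε-η approximate projections of `x` onto `S`, relative to a closed set `Sη`
with `S ⊆ Sη ⊆ S + η𝔹`: `proj_S^{ε,η}(x) := {z ∈ Sη : ‖x−z‖² < d_S(x)² + ε}`. -/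
noncomputable def approxProjEta (S Sη : Set H) (ε : ℝ) (x : H) : Set H :=
  {z | z ∈ Sη ∧ ‖x - z‖ ^ 2 < infDist x S ^ 2 + ε}

/-- `proj_S^ε(x) ⊆ proj_S^{ε,η}(x)` and
`proj_S^{ε,η}(x) ⊆ proj_S^{ε + 2η(d_S(x)+√ε) + η²}(x) + η𝔹`. -/
theorem approxProjEta_inclusions (S Sη : Set H) (hS : S.Nonempty) (hScl : IsClosed S)
    (ε η : ℝ) (hε : 0 < ε) (hη : 0 < η) (hSηcl : IsClosed Sη)
    (hsub1 : S ⊆ Sη) (hsub2 : Sη ⊆ S + η • closedBall (0 : H) 1) (x : H) :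
    approxProj S ε x ⊆ approxProjEta S Sη ε x ∧
      approxProjEta S Sη ε x ⊆
        approxProj S (ε + 2 * η * (infDist x S + Real.sqrt ε) + η ^ 2) x
          + η • closedBall (0 : H) 1 := by
  constructor
  · intro z hz
    exact ⟨hsub1 hz.1, hz.2⟩
  · intro z hz
    obtain ⟨hzS, hzd⟩ := hz
    obtain ⟨s, hs, b, hb, hsb⟩ := Set.mem_add.mp (hsub2 hzS)
    have hd0 : 0 ≤ infDist x S := infDist_nonneg
    have hzs : ‖z - s‖ ≤ η := by
      obtain ⟨c, hc, rfl⟩ := hb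
      simp only [mem_closedBall, dist_zero_right] at hc
      have : z - s = η • c := by rw [← hsb]; abel
      rw [this, norm_smul, Real.norm_eq_abs, abs_of_pos hη]
      nlinarith [norm_nonneg c]
    -- ‖x - z‖ < infDist x S + √ε
    have hxz : ‖x - z‖ < infDist x S + Real.sqrt ε := by
      have hsq : ‖x - z‖ ^ 2 < (infDist x S + Real.sqrt ε) ^ 2 := by
        have := Real.sq_sqrt hε.le
        nlinarith [Real.sqrt_nonneg ε]
      exact lt_of_pow_lt_pow_left₀ 2 (by positivity) hsq
    have hxs : ‖x - s‖ ≤ ‖x - z‖ + η := by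
      calc ‖x - s‖ = ‖(x - z) + (z - s)‖ := by rw [sub_add_sub_cancel]
        _ ≤ ‖x - z‖ + ‖z - s‖ := norm_add_le _ _
        _ ≤ ‖x - z‖ + η := by linarith
    have hkey : ‖x - s‖ ^ 2 < infDist x S ^ 2 +
        (ε + 2 * η * (infDist x S + Real.sqrt ε) + η ^ 2) := by
      nlinarith [norm_nonneg (x - s), norm_nonneg (x - z)]
    refine Set.mem_add.mpr ⟨s, ⟨hs, hkey⟩, z - s, ?_, by abel⟩
    refine Set.mem_smul_set.mpr ⟨η⁻¹ • (z - s), ?_, by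
      simp [smul_smul, mul_inv_cancel₀ hη.ne']⟩
    simp only [mem_closedBall, dist_zero_right, norm_smul, Real.norm_eq_abs,
      abs_of_pos (inv_pos.mpr hη)]
    rw [inv_mul_le_iff₀ hη]
    linarith
end

section
/- Let H be a real Hilbert space, ρ ∈ (0,+∞], and let S ⊆ H be a nonempty closed ρ-uniformly prox-regular set. Let x ∈ H with d_S(x) < ρ and let p ∈ S satisfy ‖x − p‖ = d_S(x). Let (xₙ) ⊆ H converge to x, let (εₙ) and (ηₙ) be sequences of positive numbers converging to 0, and for each n let zₙ ∈ proj_S^{εₙ,ηₙ}(xₙ) (with respect to closed sets S_{ηₙ} satisfying S ⊆ S_{ηₙ} ⊆ S + ηₙ𝔹). Then zₙ → p strongly in H. -/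
/-! Since `x - p` is a proximal normal to `S` at `p`, uniform prox-regularity and
`d_S(x) < ρ` give the quadratic growth `(1 - d_S(x)/ρ) ‖y - p‖² ≤ ‖x - y‖² - d_S(x)²` on `S`.
Each `zₙ` lies within `ηₙ` of some `wₙ ∈ S`, and `limsup ‖x - wₙ‖ ≤ d_S(x)` because `zₙ` is an
approximate projection of `xₙ → x`; the growth bound then forces `wₙ → p`, hence `zₙ → p`. -/

open Metric Set Filter
open scoped Pointwise RealInnerProductSpace Topology ENNReal

variable {H : Type*} [NormedAddCommGroup H] [InnerProductSpace ℝ H]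

/-- The proximal normal cone of `S` at `x`: the set of `ζ` such that there are `σ ≥ 0` and
`δ > 0` with `⟪ζ, y−x⟫ ≤ σ‖y−x‖²` for all `y ∈ S` with `‖y−x‖ < δ`. -/
noncomputable def proxNormalCone (S : Set H) (x : H) : Set H :=
  {ζ | ∃ σ : ℝ, 0 ≤ σ ∧ ∃ δ : ℝ, 0 < δ ∧ ∀ y ∈ S, ‖y - x‖ < δ →
    ⟪ζ, y - x⟫ ≤ σ * ‖y - x‖ ^ 2}

/-- `ρ`-uniform prox-regularity for `ρ ∈ (0, +∞]` (`ρ : ℝ≥0∞`): for all `x ∈ S` and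
`ζ ∈ N^P(S;x)`, `⟪ζ, x'−x⟫ ≤ (‖ζ‖/(2ρ))‖x'−x‖²` for all `x' ∈ S` (where `‖ζ‖/(2ρ) = 0`
when `ρ = ∞`). -/
def UniformProxRegularE (ρ : ℝ≥0∞) (S : Set H) : Prop :=
  ∀ x ∈ S, ∀ ζ ∈ proxNormalCone S x, ∀ x' ∈ S,
    ⟪ζ, x' - x⟫ ≤ (ENNReal.ofReal ‖ζ‖ / (2 * ρ)).toReal * ‖x' - x‖ ^ 2

theorem exists_mem_norm_sub_le_of_mem_add_smul_closedBall {E : Type*} [NormedAddCommGroup E]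
    [NormedSpace ℝ E] {S : Set E} {z : E} {t : ℝ} (hz : z ∈ S + t • closedBall (0 : E) 1) :
    ∃ w ∈ S, ‖z - w‖ ≤ |t| := by
  rw [smul_unitClosedBall, Real.norm_eq_abs] at hz
  obtain ⟨w, hw, b, hb, rfl⟩ := hz
  exact ⟨w, hw, by simpa using hb⟩

theorem sub_mem_proxNormalCone_of_norm_sub_eq_infDist {S : Set H} {x p : H}
    (hpd : ‖x - p‖ = infDist x S) : x - p ∈ proxNormalCone S p := by
  refine ⟨1 / 2, by norm_num, 1, one_pos, fun y hy _ => ?_⟩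
  have hpy : ‖x - p‖ ≤ ‖x - y‖ := by
    simpa [hpd, dist_eq_norm] using infDist_le_dist_of_mem hy
  have hexp : ‖x - y‖ ^ 2 = ‖x - p‖ ^ 2 - 2 * ⟪x - p, y - p⟫ + ‖y - p‖ ^ 2 := by
    rw [← norm_sub_sq_real, sub_sub_sub_cancel_right]
  nlinarith [norm_nonneg (x - p)]

theorem two_mul_toReal_ofReal_div_two_mul_lt_one {a : ℝ} {ρ : ℝ≥0∞}
    (h : ENNReal.ofReal a < ρ) : 2 * (ENNReal.ofReal a / (2 * ρ)).toReal < 1 := by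
  have hlt : 2 * (ENNReal.ofReal a / (2 * ρ)) < ENNReal.ofReal 1 := by
    rw [← mul_div_assoc, ENNReal.mul_div_mul_left _ _ two_ne_zero ENNReal.ofNat_ne_top,
      ENNReal.ofReal_one, ENNReal.div_lt_iff (Or.inl (pos_of_gt h).ne')
        (Or.inr ENNReal.ofReal_ne_top), one_mul]
    exact h
  simpa [ENNReal.toReal_mul] using ENNReal.toReal_lt_of_lt_ofReal hlt

theorem UniformProxRegularE.exists_pos_mul_sq_le {ρ : ℝ≥0∞} {S : Set H}
    (hprox : UniformProxRegularE ρ S) {x p : H} (hp : p ∈ S) (hpd : ‖x - p‖ = infDist x S)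
    (hx : ENNReal.ofReal (infDist x S) < ρ) :
    ∃ c > 0, ∀ y ∈ S, c * ‖y - p‖ ^ 2 ≤ ‖x - y‖ ^ 2 - infDist x S ^ 2 := by
  have hκ := two_mul_toReal_ofReal_div_two_mul_lt_one (hpd ▸ hx)
  refine ⟨_, sub_pos.2 hκ, fun y hy => ?_⟩
  have hnormal := hprox p hp (x - p) (sub_mem_proxNormalCone_of_norm_sub_eq_infDist hpd) y hy
  have hexp : ‖x - y‖ ^ 2 = ‖x - p‖ ^ 2 - 2 * ⟪x - p, y - p⟫ + ‖y - p‖ ^ 2 := by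
    rw [← norm_sub_sq_real, sub_sub_sub_cancel_right]
  rw [← hpd]
  linarith

theorem tendsto_of_quadratic_growth {E : Type*} [NormedAddCommGroup E] {S : Set E} {x p : E}
    {c d : ℝ} (hc : 0 < c) (hgrowth : ∀ y ∈ S, c * ‖y - p‖ ^ 2 ≤ ‖x - y‖ ^ 2 - d ^ 2)
    {ι : Type*} {l : Filter ι} {w : ι → E} (hw : ∀ i, w i ∈ S)
    (hlim : Tendsto (fun i => ‖x - w i‖) l (𝓝 d)) :
    Tendsto w l (𝓝 p) := by
  have hbound : Tendsto (fun i => √((‖x - w i‖ ^ 2 - d ^ 2) / c)) l (𝓝 0) := by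
    convert (((hlim.pow 2).sub_const (d ^ 2)).div_const c).sqrt using 2
    simp
  refine tendsto_iff_norm_sub_tendsto_zero.2 <|
    squeeze_zero (fun _ => norm_nonneg _) (fun i => Real.le_sqrt_of_sq_le ?_) hbound
  rw [le_div_iff₀ hc]
  linarith [hgrowth _ (hw i)]

theorem norm_sub_le_of_mem_approxProjEta {E : Type*} [NormedAddCommGroup E] {S Sη : Set E}
    {ε r : ℝ} {x y z w : E} (hz : z ∈ approxProjEta S Sη ε y) (hzw : ‖z - w‖ ≤ r) :
    ‖x - w‖ ≤ ‖y - x‖ + √(infDist y S ^ 2 + ε) + r := by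
  have hyz : ‖y - z‖ ≤ √(infDist y S ^ 2 + ε) := Real.le_sqrt_of_sq_le hz.2.le
  calc ‖x - w‖ = ‖(x - y) + (y - z) + (z - w)‖ := by abel_nf
    _ ≤ ‖x - y‖ + ‖y - z‖ + ‖z - w‖ := norm_add₃_le
    _ ≤ ‖y - x‖ + √(infDist y S ^ 2 + ε) + r := by
      rw [norm_sub_rev x y]
      gcongr

theorem approxProjEta_tendsto_proj_general (ρ : ℝ≥0∞) (S : Set H)
    (hprox : UniformProxRegularE ρ S)
    (x : H) (hx : ENNReal.ofReal (infDist x S) < ρ)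
    (p : H) (hp : p ∈ S) (hpd : ‖x - p‖ = infDist x S)
    (xn : ℕ → H) (hxn : Tendsto xn atTop (𝓝 x))
    (εn ηn : ℕ → ℝ) (hεn0 : Tendsto εn atTop (𝓝 0)) (hηn0 : Tendsto ηn atTop (𝓝 0))
    (Sη : ℕ → Set H) (hsub2 : ∀ n, Sη n ⊆ S + ηn n • closedBall (0 : H) 1)
    (zn : ℕ → H) (hzn : ∀ n, zn n ∈ approxProjEta S (Sη n) (εn n) (xn n)) :
    Tendsto zn atTop (𝓝 p) := by
  choose w hwS hzw using fun n =>
    exists_mem_norm_sub_le_of_mem_add_smul_closedBall (hsub2 n (hzn n).1)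
  obtain ⟨c, hc, hgrowth⟩ := hprox.exists_pos_mul_sq_le hp hpd hx
  have hη : Tendsto (fun n => |ηn n|) atTop (𝓝 0) := by simpa using hηn0.abs
  have hdist : Tendsto (fun n => infDist (xn n) S) atTop (𝓝 (infDist x S)) :=
    ((continuous_infDist_pt S).tendsto x).comp hxn
  have hupper : Tendsto (fun n => ‖xn n - x‖ + √(infDist (xn n) S ^ 2 + εn n) + |ηn n|)
      atTop (𝓝 (infDist x S)) := by
    simpa [Real.sqrt_sq infDist_nonneg] using
      ((tendsto_iff_norm_sub_tendsto_zero.1 hxn).add ((hdist.pow 2).add hεn0).sqrt).add hη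
  have hw : Tendsto (fun n => ‖x - w n‖) atTop (𝓝 (infDist x S)) :=
    tendsto_of_tendsto_of_tendsto_of_le_of_le tendsto_const_nhds hupper
      (fun n => by simpa [dist_eq_norm] using infDist_le_dist_of_mem (hwS n))
      (fun n => norm_sub_le_of_mem_approxProjEta (hzn n) (hzw n))
  refine (tendsto_of_quadratic_growth hc hgrowth hwS hw).congr_dist ?_
  exact squeeze_zero (fun _ => dist_nonneg)
    (fun n => by simpa [dist_eq_norm, norm_sub_rev] using hzw n) hη

/-- If `S` is `ρ`-uniformly prox-regular, `d_S(x) < ρ`, `p` is the projection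
of `x` onto `S`, `xₙ → x`, `εₙ, ηₙ → 0` and `zₙ ∈ proj_S^{εₙ,ηₙ}(xₙ)`, then `zₙ → p`. -/
theorem approxProjEta_tendsto_proj (ρ : ℝ≥0∞) (hρ : 0 < ρ)
    (S : Set H) (hS : S.Nonempty) (hScl : IsClosed S)
    (hprox : UniformProxRegularE ρ S)
    (x : H) (hx : ENNReal.ofReal (infDist x S) < ρ)
    (p : H) (hp : p ∈ S) (hpd : ‖x - p‖ = infDist x S)
    (xn : ℕ → H) (hxn : Tendsto xn atTop (𝓝 x))
    (εn ηn : ℕ → ℝ) (hεn : ∀ n, 0 < εn n) (hηn : ∀ n, 0 < ηn n)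
    (hεn0 : Tendsto εn atTop (𝓝 0)) (hηn0 : Tendsto ηn atTop (𝓝 0))
    (Sη : ℕ → Set H) (hSηcl : ∀ n, IsClosed (Sη n))
    (hsub1 : ∀ n, S ⊆ Sη n) (hsub2 : ∀ n, Sη n ⊆ S + ηn n • closedBall (0 : H) 1)
    (zn : ℕ → H) (hzn : ∀ n, zn n ∈ approxProjEta S (Sη n) (εn n) (xn n)) :
    Tendsto zn atTop (𝓝 p) :=
  approxProjEta_tendsto_proj_general ρ S hprox x hx p hp hpd xn hxn εn ηn hεn0 hηn0 Sη hsub2 zn hzn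
end

section
/- Let P be a real symmetric positive definite n×n matrix with positive definite square root R (R² = P), let B be an n×m real matrix and C an m×n real matrix with PB = Cᵀ, let q ∈ ℝᵐ, and let x ∈ ℝⁿ. For any λ, λ' ∈ ℝᵐ, set y := Bλ + R⁻¹x and y' := Bλ' + R⁻¹x. Then ‖x − Ry‖² − ‖x − Ry'‖² ≤ (‖P‖‖B(λ + λ') + 2R⁻¹x‖ + 2‖Rx‖)‖B‖‖λ − λ'‖, where ‖P‖ and ‖B‖ denote operator (spectral) norms and ‖·‖ the Euclidean norm on vectors. -/
open scoped RealInnerProductSpace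

/-- The key estimate for the primal-dual method: with `P` symmetric positive
definite, `R = √P`, `PB = Cᵀ`, `y = Bλ + R⁻¹x` and `y' = Bλ' + R⁻¹x`, one has
`‖x − Ry‖² − ‖x − Ry'‖² ≤ (‖P‖‖B(λ+λ') + 2R⁻¹x‖ + 2‖Rx‖)‖B‖‖λ − λ'‖`.
Matrices are formalized as continuous linear maps between Euclidean spaces, with the operator
norm induced by the Euclidean norm. -/
theorem primalDual_key_estimate {n m : ℕ}
    (P R Rinv : EuclideanSpace ℝ (Fin n) →L[ℝ] EuclideanSpace ℝ (Fin n))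
    (B : EuclideanSpace ℝ (Fin m) →L[ℝ] EuclideanSpace ℝ (Fin n))
    (C : EuclideanSpace ℝ (Fin n) →L[ℝ] EuclideanSpace ℝ (Fin m))
    (hPsym : ∀ u v, ⟪P u, v⟫ = ⟪u, P v⟫)
    (hPpos : ∀ v, v ≠ 0 → 0 < ⟪P v, v⟫)
    (hRsym : ∀ u v, ⟪R u, v⟫ = ⟪u, R v⟫)
    (hRpos : ∀ v, v ≠ 0 → 0 < ⟪R v, v⟫)
    (hR2 : R ∘L R = P)
    (hPB : P ∘L B = ContinuousLinearMap.adjoint C)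
    (hRinv₁ : R ∘L Rinv = ContinuousLinearMap.id ℝ _)
    (hRinv₂ : Rinv ∘L R = ContinuousLinearMap.id ℝ _)
    (q : EuclideanSpace ℝ (Fin m))
    (x : EuclideanSpace ℝ (Fin n)) (lam lam' : EuclideanSpace ℝ (Fin m)) :
    ‖x - R (B lam + Rinv x)‖ ^ 2 - ‖x - R (B lam' + Rinv x)‖ ^ 2 ≤
      (‖P‖ * ‖B (lam + lam') + (2 : ℝ) • Rinv x‖ + 2 * ‖R x‖) * ‖B‖ * ‖lam - lam'‖ := by
  have hRR : ∀ v, R (Rinv v) = v := fun v =>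
    congrFun (congrArg DFunLike.coe hRinv₁) v
  have hP : ∀ v, P v = R (R v) := fun v =>
    (congrFun (congrArg DFunLike.coe hR2) v).symm
  set u := B (lam + lam') + (2 : ℝ) • Rinv x with hu
  set d := lam - lam' with hd
  have h1 : x - R (B lam + Rinv x) = -(R (B lam)) := by
    rw [map_add, hRR]; abel
  have h1' : x - R (B lam' + Rinv x) = -(R (B lam')) := by
    rw [map_add, hRR]; abel
  rw [h1, h1', norm_neg, norm_neg]
  have key : ‖R (B lam)‖ ^ 2 - ‖R (B lam')‖ ^ 2
      = ⟪P u, B d⟫ - 2 * ⟪R x, B d⟫ := by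
    have e1 : ‖R (B lam)‖ ^ 2 - ‖R (B lam')‖ ^ 2
        = ⟪R (B lam) + R (B lam'), R (B lam) - R (B lam')⟫ := by
      rw [inner_add_left, inner_sub_right, inner_sub_right,
        real_inner_self_eq_norm_sq, real_inner_self_eq_norm_sq,
        real_inner_comm (R (B lam'))]
      ring
    rw [e1, ← map_add, ← map_sub, ← map_add, ← map_sub, hRsym, ← hP, ← hPsym]
    have e2 : P u = P (B (lam + lam')) + (2 : ℝ) • R x := by
      rw [hu, map_add, map_smul, hP (Rinv x), hRR]
    rw [e2, inner_add_left, real_inner_smul_left, hd]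
    ring
  rw [key]
  have hBd : ‖B d‖ ≤ ‖B‖ * ‖d‖ := B.le_opNorm d
  have hPu : ‖P u‖ ≤ ‖P‖ * ‖u‖ := P.le_opNorm u
  have hb1 : ⟪P u, B d⟫ ≤ ‖P‖ * ‖u‖ * (‖B‖ * ‖d‖) := by
    calc ⟪P u, B d⟫ ≤ ‖P u‖ * ‖B d‖ := real_inner_le_norm _ _
      _ ≤ ‖P‖ * ‖u‖ * (‖B‖ * ‖d‖) :=
        mul_le_mul hPu hBd (norm_nonneg _) (by positivity)
  have hb2 : -⟪R x, B d⟫ ≤ ‖R x‖ * (‖B‖ * ‖d‖) := by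
    calc -⟪R x, B d⟫ ≤ |⟪R x, B d⟫| := neg_le_abs _
      _ ≤ ‖R x‖ * ‖B d‖ := abs_real_inner_le_norm _ _
      _ ≤ ‖R x‖ * (‖B‖ * ‖d‖) :=
        mul_le_mul_of_nonneg_left hBd (norm_nonneg _)
  linarith [hb1, hb2]
end

section
/- Let P be a real symmetric positive definite n×n matrix with positive definite square root R, let B (n×m) and C (m×n) satisfy PB = Cᵀ, let q ∈ ℝᵐ, and let K := {y ∈ ℝⁿ : Cy + q ≥ 0} be nonempty, S := R(K) = {Ry : y ∈ K}, and x ∈ ℝⁿ. Let y* ∈ K be a minimizer of y ↦ ‖x − Ry‖² over K and λ* ∈ ℝᵐ₊ a maximizer of the dual problem λ ↦ −λᵀCBλ − 2(CR⁻¹x + q)ᵀλ − ‖x‖² over λ ≥ 0, related by y* = Bλ* + R⁻¹x. Let (λ_k) ⊆ ℝᵐ₊ be any sequence and set y_k := Bλ_k + R⁻¹x. Then: (i) ‖y_k − y*‖ ≤ ‖B‖‖λ_k − λ*‖ for all k; and (ii) if M := sup_k (‖P‖‖B(λ_k + λ*) + 2R⁻¹x‖ + 2‖Rx‖)‖B‖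 is finite, ε, η > 0, and for some index k̄ one has ‖λ_{k̄} − λ*‖ < ε/M and ‖λ_{k̄} − λ*‖ ≤ η/(‖B‖‖R‖), then z := R y_{k̄} satisfies z ∈ S + η𝔹 and ‖x − z‖² < d_S(x)² + ε, i.e., z ∈ proj_S^{ε,η}(x). -/
open Metric Set
open scoped Pointwise RealInnerProductSpace

/-! Writing `y_k = Bλ_k + R⁻¹x` and `y* = Bλ* + R⁻¹x`, the primal error is the image under `B`
of the dual error, which gives (i). Since `y*` minimises `‖x − Ry‖` over `K`, `d_S(x) = ‖x − Ry*‖`,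
and `Ry*` lies within `‖R‖‖B‖‖λ_k̄ − λ*‖ ≤ η` of `z = Ry_k̄`. For the objective, the difference of
squares `‖x − Ry_k̄‖² − ‖x − Ry*‖² = ⟪y_k̄ − y*, P(y_k̄ + y*) − 2Rx⟫` is bounded by Cauchy–Schwarz
by `‖λ_k̄ − λ*‖ · M < ε`. -/

theorem norm_apply_add_sub_apply_add_le {𝕜 E F : Type*} [NontriviallyNormedField 𝕜]
    [SeminormedAddCommGroup E] [SeminormedAddCommGroup F] [NormedSpace 𝕜 E] [NormedSpace 𝕜 F]
    (B : F →L[𝕜] E) (c : E) (l l' : F) : ‖(B l + c) - (B l' + c)‖ ≤ ‖B‖ * ‖l - l'‖ := by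
  rw [add_sub_add_right_eq_sub, ← map_sub]
  exact B.le_opNorm _

section Projection

variable {α : Type*} [PseudoMetricSpace α]

theorem Metric.infDist_eq_dist_of_forall_dist_le {s : Set α} {x p : α} (hp : p ∈ s)
    (h : ∀ z ∈ s, dist x p ≤ dist x z) : infDist x s = dist x p :=
  (infDist_le_dist_of_mem hp).antisymm <| not_lt.1 fun hlt =>
    let ⟨z, hz, hd⟩ := (infDist_lt_iff ⟨p, hp⟩).1 hlt
    (h z hz).not_gt hd

variable {E : Type*} [NormedAddCommGroup E] [NormedSpace ℝ E]

theorem mem_add_smul_unitClosedBall {s : Set E} {p z : E} {η : ℝ} (hp : p ∈ s) (hη : 0 ≤ η)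
    (hz : ‖z - p‖ ≤ η) : z ∈ s + η • closedBall (0 : E) 1 := by
  rw [smul_unitClosedBall_of_nonneg hη, ← add_sub_cancel p z]
  exact add_mem_add hp (mem_closedBall_zero_iff.2 hz)

end Projection

section SquareRoot

variable {E : Type*} [NormedAddCommGroup E] [InnerProductSpace ℝ E]

theorem norm_sub_sq_sub_norm_sub_sq_real (x a b : E) :
    ‖x - a‖ ^ 2 - ‖x - b‖ ^ 2 = ⟪a - b, a + b - (2 : ℝ) • x⟫ := by
  simp only [norm_sub_sq_real, inner_sub_left, inner_add_right, inner_sub_right,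
    inner_smul_right, real_inner_self_eq_norm_sq, real_inner_comm x, real_inner_comm a b]
  ring

theorem norm_sub_sq_sub_norm_sub_sq_le_of_isSymmetric {P R : E →L[ℝ] E}
    (hR : (R : E →ₗ[ℝ] E).IsSymmetric) (hRP : R ∘L R = P) (x y y' : E) :
    ‖x - R y‖ ^ 2 - ‖x - R y'‖ ^ 2 ≤ ‖y - y'‖ * (‖P‖ * ‖y + y'‖ + 2 * ‖R x‖) :=
  calc ‖x - R y‖ ^ 2 - ‖x - R y'‖ ^ 2 = ⟪R (y - y'), R (y + y') - (2 : ℝ) • x⟫ := by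
        rw [norm_sub_sq_sub_norm_sub_sq_real, map_sub, map_add]
    _ = ⟪y - y', R (R (y + y') - (2 : ℝ) • x)⟫ := hR _ _
    _ = ⟪y - y', P (y + y') - (2 : ℝ) • R x⟫ := by
        rw [map_sub, map_smul, ← hRP]
        rfl
    _ ≤ ‖y - y'‖ * ‖P (y + y') - (2 : ℝ) • R x‖ := real_inner_le_norm _ _
    _ ≤ ‖y - y'‖ * (‖P‖ * ‖y + y'‖ + 2 * ‖R x‖) := by
        gcongr
        refine (norm_sub_le _ _).trans (add_le_add (P.le_opNorm _) ?_)
        rw [norm_smul, Real.norm_two]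

theorem norm_sub_sq_sub_norm_sub_sq_affine_le {F : Type*} [NormedAddCommGroup F]
    [NormedSpace ℝ F] {P R : E →L[ℝ] E} (hR : (R : E →ₗ[ℝ] E).IsSymmetric) (hRP : R ∘L R = P)
    (B : F →L[ℝ] E) (c x : E) (l l' : F) :
    ‖x - R (B l + c)‖ ^ 2 - ‖x - R (B l' + c)‖ ^ 2 ≤
      ‖l - l'‖ * ((‖P‖ * ‖B (l + l') + (2 : ℝ) • c‖ + 2 * ‖R x‖) * ‖B‖) := by
  have hsum : (B l + c) + (B l' + c) = B (l + l') + (2 : ℝ) • c := by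
    rw [map_add, two_smul]
    abel
  calc ‖x - R (B l + c)‖ ^ 2 - ‖x - R (B l' + c)‖ ^ 2
      ≤ ‖(B l + c) - (B l' + c)‖ * (‖P‖ * ‖B (l + l') + (2 : ℝ) • c‖ + 2 * ‖R x‖) := by
        rw [← hsum]
        exact norm_sub_sq_sub_norm_sub_sq_le_of_isSymmetric hR hRP x _ _
    _ ≤ ‖B‖ * ‖l - l'‖ * (‖P‖ * ‖B (l + l') + (2 : ℝ) • c‖ + 2 * ‖R x‖) := by
        gcongr
        exact norm_apply_add_sub_apply_add_le B c l l'
    _ = ‖l - l'‖ * ((‖P‖ * ‖B (l + l') + (2 : ℝ) • c‖ + 2 * ‖R x‖) * ‖B‖) := by ring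

end SquareRoot

theorem primalDual_approxProj_general {n m : ℕ}
    (P R Rinv : EuclideanSpace ℝ (Fin n) →L[ℝ] EuclideanSpace ℝ (Fin n))
    (B : EuclideanSpace ℝ (Fin m) →L[ℝ] EuclideanSpace ℝ (Fin n))
    (hRsym : ∀ u v, ⟪R u, v⟫ = ⟪u, R v⟫)
    (hR2 : R ∘L R = P)
    (x : EuclideanSpace ℝ (Fin n))
    -- the feasible set K and the constraint set S = R(K)
    (K : Set (EuclideanSpace ℝ (Fin n)))
    (S : Set (EuclideanSpace ℝ (Fin n))) (hSdef : S = R '' K)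
    -- the primal solution y*
    (ystar : EuclideanSpace ℝ (Fin n)) (hystarK : ystar ∈ K)
    (hystarmin : ∀ y ∈ K, ‖x - R ystar‖ ^ 2 ≤ ‖x - R y‖ ^ 2)
    -- the dual solution λ*
    (lamstar : EuclideanSpace ℝ (Fin m))
    -- the KKT relation
    (hKKT : ystar = B lamstar + Rinv x)
    -- the dual sequence
    (lam : ℕ → EuclideanSpace ℝ (Fin m))
    -- M := sup_k (‖P‖‖B(λ_k + λ*) + 2R⁻¹x‖ + 2‖Rx‖)‖B‖ is finite
    (g : ℕ → ℝ)
    (hg : ∀ k, g k = (‖P‖ * ‖B (lam k + lamstar) + (2 : ℝ) • Rinv x‖ + 2 * ‖R x‖) * ‖B‖)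
    (hBdd : BddAbove (Set.range g)) :
    (∀ k : ℕ, ‖(B (lam k) + Rinv x) - ystar‖ ≤ ‖B‖ * ‖lam k - lamstar‖) ∧
    (∀ ε η : ℝ, 0 < ε → 0 < η → ∀ kbar : ℕ,
      ‖lam kbar - lamstar‖ < ε / (⨆ k, g k) →
      ‖lam kbar - lamstar‖ ≤ η / (‖B‖ * ‖R‖) →
      R (B (lam kbar) + Rinv x) ∈ S + η • closedBall (0 : EuclideanSpace ℝ (Fin n)) 1 ∧
      ‖x - R (B (lam kbar) + Rinv x)‖ ^ 2 < infDist x S ^ 2 + ε) := by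
  subst hKKT hSdef
  have primal_err (k : ℕ) := norm_apply_add_sub_apply_add_le B (Rinv x) (lam k) lamstar
  refine ⟨primal_err, fun ε η hε hη kbar hε' hη' => ⟨?_, ?_⟩⟩
  · refine mem_add_smul_unitClosedBall (mem_image_of_mem R hystarK) hη.le ?_
    calc ‖R _ - R _‖ ≤ ‖R‖ * (‖B‖ * ‖lam kbar - lamstar‖) := by
          rw [← map_sub]
          exact R.le_opNorm_of_le (primal_err kbar)
      _ = ‖lam kbar - lamstar‖ * (‖B‖ * ‖R‖) := by ring
      _ ≤ η := mul_le_of_le_div₀ hη.le (by positivity) hη'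
  · have hdist : infDist x (R '' K) = ‖x - R (B lamstar + Rinv x)‖ := by
      rw [← dist_eq_norm]
      refine infDist_eq_dist_of_forall_dist_le (mem_image_of_mem R hystarK) ?_
      rintro _ ⟨y, hy, rfl⟩
      simpa only [dist_eq_norm, sq_le_sq₀ (norm_nonneg _) (norm_nonneg _)] using hystarmin y hy
    have hM : 0 < ⨆ k, g k :=
      (div_pos_iff_of_pos_left hε).1 ((norm_nonneg _).trans_lt hε')
    have hgap : ‖lam kbar - lamstar‖ * g kbar < ε :=
      calc ‖lam kbar - lamstar‖ * g kbar ≤ ‖lam kbar - lamstar‖ * ⨆ k, g k := by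
            gcongr
            exact le_ciSup hBdd kbar
        _ < ε := (lt_div_iff₀ hM).1 hε'
    have hgain := norm_sub_sq_sub_norm_sub_sq_affine_le hRsym hR2 B (Rinv x) x (lam kbar) lamstar
    rw [← hg] at hgain
    rw [hdist]
    linarith

/-- Properties of the primal-dual method for computing ε-η approximate
projections onto `S = R(K)`, `K = {y : Cy + q ≥ 0}`: (i) the primal iterates
`y_k = Bλ_k + R⁻¹x` satisfy `‖y_k − y*‖ ≤ ‖B‖‖λ_k − λ*‖`; (ii) if the dual iterate is close
enough to `λ*`, then `z = Ry_k̄` is an ε-η approximate projection of `x` onto `S`, i.e.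
`z ∈ S + η𝔹` and `‖x − z‖² < d_S(x)² + ε`. -/
theorem primalDual_approxProj {n m : ℕ}
    (P R Rinv : EuclideanSpace ℝ (Fin n) →L[ℝ] EuclideanSpace ℝ (Fin n))
    (B : EuclideanSpace ℝ (Fin m) →L[ℝ] EuclideanSpace ℝ (Fin n))
    (C : EuclideanSpace ℝ (Fin n) →L[ℝ] EuclideanSpace ℝ (Fin m))
    (hPsym : ∀ u v, ⟪P u, v⟫ = ⟪u, P v⟫)
    (hPpos : ∀ v, v ≠ 0 → 0 < ⟪P v, v⟫)
    (hRsym : ∀ u v, ⟪R u, v⟫ = ⟪u, R v⟫)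
    (hRpos : ∀ v, v ≠ 0 → 0 < ⟪R v, v⟫)
    (hR2 : R ∘L R = P)
    (hPB : P ∘L B = ContinuousLinearMap.adjoint C)
    (hRinv₁ : R ∘L Rinv = ContinuousLinearMap.id ℝ _)
    (hRinv₂ : Rinv ∘L R = ContinuousLinearMap.id ℝ _)
    (q : EuclideanSpace ℝ (Fin m)) (x : EuclideanSpace ℝ (Fin n))
    -- the feasible set K and the constraint set S = R(K)
    (K : Set (EuclideanSpace ℝ (Fin n)))
    (hKdef : K = {y | ∀ i : Fin m, 0 ≤ C y i + q i}) (hKne : K.Nonempty)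
    (S : Set (EuclideanSpace ℝ (Fin n))) (hSdef : S = R '' K)
    -- the primal solution y*
    (ystar : EuclideanSpace ℝ (Fin n)) (hystarK : ystar ∈ K)
    (hystarmin : ∀ y ∈ K, ‖x - R ystar‖ ^ 2 ≤ ‖x - R y‖ ^ 2)
    -- the dual solution λ*
    (lamstar : EuclideanSpace ℝ (Fin m)) (hlamstarpos : ∀ i, 0 ≤ lamstar i)
    (hlamstarmax : ∀ lam : EuclideanSpace ℝ (Fin m), (∀ i, 0 ≤ lam i) →
      -⟪lam, C (B lam)⟫ - 2 * ⟪C (Rinv x) + q, lam⟫ - ‖x‖ ^ 2 ≤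
        -⟪lamstar, C (B lamstar)⟫ - 2 * ⟪C (Rinv x) + q, lamstar⟫ - ‖x‖ ^ 2)
    -- the KKT relation
    (hKKT : ystar = B lamstar + Rinv x)
    -- the dual sequence
    (lam : ℕ → EuclideanSpace ℝ (Fin m)) (hlampos : ∀ k, ∀ i, 0 ≤ lam k i)
    -- M := sup_k (‖P‖‖B(λ_k + λ*) + 2R⁻¹x‖ + 2‖Rx‖)‖B‖ is finite
    (g : ℕ → ℝ)
    (hg : ∀ k, g k = (‖P‖ * ‖B (lam k + lamstar) + (2 : ℝ) • Rinv x‖ + 2 * ‖R x‖) * ‖B‖)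
    (hBdd : BddAbove (Set.range g)) :
    (∀ k : ℕ, ‖(B (lam k) + Rinv x) - ystar‖ ≤ ‖B‖ * ‖lam k - lamstar‖) ∧
    (∀ ε η : ℝ, 0 < ε → 0 < η → ∀ kbar : ℕ,
      ‖lam kbar - lamstar‖ < ε / (⨆ k, g k) →
      ‖lam kbar - lamstar‖ ≤ η / (‖B‖ * ‖R‖) →
      R (B (lam kbar) + Rinv x) ∈ S + η • closedBall (0 : EuclideanSpace ℝ (Fin n)) 1 ∧
      ‖x - R (B (lam kbar) + Rinv x)‖ ^ 2 < infDist x S ^ 2 + ε) :=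
  primalDual_approxProj_general P R Rinv B hRsym hR2 x K S hSdef ystar hystarK hystarmin lamstar
    hKKT lam g hg hBdd
end
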